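/- arXiv:2405.11720 — 6 statements merged into one kernel-verified Lean document; each statement's English description precedes it below -/
import Mathlib

section
/- Let (Ω, 𝓕, P) be a probability space, T : Ω → ℝ a random variable, D : Ω → {−1, 1} a random variable, and N_j, N_k : Ω → ℝ random variables with N_j < N_k almost surely; set Δ_j = 1{T ≤ N_j} and Δ_k = 1{T ≤ N_k}. Let E ∈ 𝓕 be an event. Assume (N_j, N_k) is independent of (T, D), E is independent of the σ-algebra generated by (T, D, N_j, N_k), and P({N_j = s} ∩ {N_k = s + τ} ∩ E) > 0 for given s ≥ 0 and τ > 0. Then for every a ∈ {−1, 1}, P(D = a, s < T ≤ s + τ) = P(D = a, Δ_j = 0, Δ_k = 1 ∣ N_j = s, N_k = s + τ, E). (Theorem 1 of the paper.) -/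
open MeasureTheory ProbabilityTheory
open scoped ENNReal

/-- Theorem 1 of the paper: the probability that the rule fires and the event
occurs in `(s, s+τ]` is identifiable from observed adjacent negative-positive biopsy pairs. -/
theorem identifiability_from_adjacent_negative_positive_pairs
    {Ω : Type*} [MeasurableSpace Ω] (P : Measure Ω) [IsProbabilityMeasure P]
    (T D Nj Nk : Ω → ℝ)
    (hT : Measurable T) (hD : Measurable D) (hNj : Measurable Nj) (hNk : Measurable Nk)
    (hDval : ∀ ω, D ω = 1 ∨ D ω = -1)
    (hlt : ∀ᵐ ω ∂P, Nj ω < Nk ω)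
    (Δj Δk : Ω → ℝ)
    (hΔj : ∀ ω, Δj ω = if T ω ≤ Nj ω then 1 else 0)
    (hΔk : ∀ ω, Δk ω = if T ω ≤ Nk ω then 1 else 0)
    (E : Set Ω) (hE : MeasurableSet E)
    (s τ : ℝ) (hs : 0 ≤ s) (hτ : 0 < τ)
    (hIndepPair : IndepFun (fun ω => (Nj ω, Nk ω)) (fun ω => (T ω, D ω)) P)
    (hIndepE : Indep
      (MeasurableSpace.comap (fun ω => (T ω, D ω, Nj ω, Nk ω)) inferInstance)
      (MeasurableSpace.generateFrom {E}) P)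
    (hpos : 0 < P ({ω | Nj ω = s} ∩ {ω | Nk ω = s + τ} ∩ E)) :
    ∀ a : ℝ, (a = 1 ∨ a = -1) →
      P ({ω | D ω = a} ∩ {ω | s < T ω ∧ T ω ≤ s + τ})
        = P (({ω | D ω = a} ∩ {ω | Δj ω = 0} ∩ {ω | Δk ω = 1}) ∩
              ({ω | Nj ω = s} ∩ {ω | Nk ω = s + τ} ∩ E)) /
            P ({ω | Nj ω = s} ∩ {ω | Nk ω = s + τ} ∩ E) := by
  intro a ha
  -- notation
  set A : Set Ω := {ω | D ω = a} ∩ {ω | s < T ω ∧ T ω ≤ s + τ} with hA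
  set B : Set Ω := {ω | Nj ω = s} ∩ {ω | Nk ω = s + τ} with hB
  -- Step 1: rewrite the numerator set
  have hset : (({ω | D ω = a} ∩ {ω | Δj ω = 0} ∩ {ω | Δk ω = 1}) ∩ (B ∩ E))
      = (A ∩ B) ∩ E := by
    ext ω
    simp only [hA, hB, Set.mem_inter_iff, Set.mem_setOf_eq, hΔj ω, hΔk ω]
    constructor
    · rintro ⟨⟨⟨hDa, h0⟩, h1⟩, ⟨hj, hk⟩, hEω⟩
      refine ⟨⟨⟨hDa, ?_, ?_⟩, hj, hk⟩, hEω⟩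
      · by_contra hle
        push_neg at hle
        rw [if_pos (hj ▸ hle)] at h0; norm_num at h0
      · by_contra hgt
        push_neg at hgt
        rw [if_neg (by rw [hk]; linarith)] at h1; norm_num at h1
    · rintro ⟨⟨⟨hDa, hsT, hTτ⟩, hj, hk⟩, hEω⟩
      refine ⟨⟨⟨hDa, ?_⟩, ?_⟩, ⟨hj, hk⟩, hEω⟩
      · rw [if_neg (by rw [hj]; linarith)]
      · rw [if_pos (by rw [hk]; exact hTτ)]
  -- Step 2: independence of A ∩ B from E
  have hABmeas : MeasurableSet[MeasurableSpace.comap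
      (fun ω => (T ω, D ω, Nj ω, Nk ω)) inferInstance] (A ∩ B) := by
    refine ⟨(Set.Ioc s (s + τ)) ×ˢ ({a} ×ˢ ({s} ×ˢ {(s + τ)})), ?_, ?_⟩
    · exact measurableSet_Ioc.prod ((measurableSet_singleton a).prod
        ((measurableSet_singleton s).prod (measurableSet_singleton (s + τ))))
    · ext ω
      simp only [hA, hB, Set.mem_preimage, Set.mem_prod, Set.mem_Ioc, Set.mem_singleton_iff,
        Set.mem_inter_iff, Set.mem_setOf_eq]
      tauto
  have hEmem : MeasurableSet[MeasurableSpace.generateFrom ({E} : Set (Set Ω))] E :=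
    MeasurableSpace.measurableSet_generateFrom rfl
  have h1 : P ((A ∩ B) ∩ E) = P (A ∩ B) * P E :=
    (hIndepE.indepSet_of_measurableSet hABmeas hEmem).measure_inter_eq_mul
  -- Step 3: independence of A from B
  have hBpre : B = (fun ω => (Nj ω, Nk ω)) ⁻¹' {(s, s + τ)} := by
    ext ω
    simp [hB, Prod.ext_iff]
  have hApre : A = (fun ω => (T ω, D ω)) ⁻¹' ((Set.Ioc s (s + τ)) ×ˢ {a}) := by
    ext ω
    simp only [hA, Set.mem_preimage, Set.mem_prod, Set.mem_Ioc, Set.mem_singleton_iff,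
      Set.mem_inter_iff, Set.mem_setOf_eq]
    tauto
  have h2 : P (B ∩ A) = P B * P A := by
    rw [hBpre, hApre]
    exact hIndepPair.measure_inter_preimage_eq_mul _ _
      (measurableSet_singleton _) (measurableSet_Ioc.prod (measurableSet_singleton a))
  -- Step 4: independence of B from E
  have hBmeas : MeasurableSet[MeasurableSpace.comap
      (fun ω => (T ω, D ω, Nj ω, Nk ω)) inferInstance] B := by
    refine ⟨Set.univ ×ˢ (Set.univ ×ˢ ({s} ×ˢ {(s + τ)})), ?_, ?_⟩
    · exact MeasurableSet.univ.prod (MeasurableSet.univ.prod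
        ((measurableSet_singleton s).prod (measurableSet_singleton (s + τ))))
    · ext ω
      simp [hB, eq_comm]
  have h3 : P (B ∩ E) = P B * P E :=
    (hIndepE.indepSet_of_measurableSet hBmeas hEmem).measure_inter_eq_mul
  -- assemble
  have hBE : B ∩ E = {ω | Nj ω = s} ∩ {ω | Nk ω = s + τ} ∩ E := rfl
  have hABcomm : A ∩ B = B ∩ A := Set.inter_comm _ _
  rw [hset, h1, hABcomm, h2, ← hBE, h3]
  have hne : P B * P E ≠ 0 := by
    rw [← h3]; exact (lt_of_lt_of_le hpos (le_of_eq rfl)).ne'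
  have htop : P B * P E ≠ ⊤ := by
    rw [← h3]; exact (measure_ne_top P _)
  rw [show P B * P A * P E = P A * (P B * P E) by ring, mul_div_assoc,
    ENNReal.div_self hne htop, mul_one]
end

section
/- Let (Ω, 𝓕, P) be a probability space, T : Ω → ℝ a random variable, D : Ω → {−1, 1} a random variable, and N_j, N_k : Ω → ℝ random variables with N_j < N_k almost surely; set Δ_j = 1{T ≤ N_j} and Δ_k = 1{T ≤ N_k}. Let E ∈ 𝓕 be an event. Assume (N_j, N_k) is independent of (T, D), E is independent of the σ-algebra generated by (T, D, N_j, N_k), P({N_j = s} ∩ {N_k = s + τ}) > 0, P({N_j = s} ∩ {N_k = s + τ} ∩ E) > 0, and P(s < T ≤ s + τ) > 0, for given s ≥ 0 and τ > 0. Then the true positive rate satisfies P(D = 1 ∣ s < T ≤ s + τ) = P(D = 1, Δ_j = 0, Δ_k = 1, E ∣ N_j = s, N_k = s + τ) / P(Δ_j = 0, Δ_k = 1, E ∣ N_j = s, N_k = s + τ). -/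
open MeasureTheory ProbabilityTheory
open scoped ENNReal

/-! On the event `{N_j = s, N_k = s + τ}` the biopsy pattern `Δ_j = 0, Δ_k = 1` is exactly the
event `s < T ≤ s + τ`. Conditioning on the biopsy times therefore turns both probabilities of the
ratio into `P(· ∩ {s < T ≤ s + τ}) · P(E)`, by independence of `(N_j, N_k)` from `(T, D)` and of
`E` from everything else; the factor `P(E)` cancels in the ratio. -/

lemma ite_le_eq_zero_and_ite_le_eq_one_iff {t a b : ℝ} :
    ((if t ≤ a then 1 else 0 : ℝ) = 0 ∧ (if t ≤ b then 1 else 0 : ℝ) = 1) ↔ a < t ∧ t ≤ b := by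
  split_ifs <;> simp_all

lemma measure_inter_inter_div_eq_mul_of_indep {Ω : Type*} {m₁ m₂ m mΩ : MeasurableSpace Ω}
    {μ : Measure Ω} [IsFiniteMeasure μ] {E F G : Set Ω} (h₁₂ : Indep m₁ m₂ μ)
    (hE : Indep m (MeasurableSpace.generateFrom {E}) μ) (h₁ : m₁ ≤ m) (h₂ : m₂ ≤ m)
    (hF : MeasurableSet[m₁] F) (hG : MeasurableSet[m₂] G) (hF₀ : μ F ≠ 0) :
    μ (F ∩ G ∩ E) / μ F = μ G * μ E := by
  rw [(Indep_iff _ _ _).1 hE _ _ ((h₁ _ hF).inter (h₂ _ hG))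
      (MeasurableSpace.measurableSet_generateFrom rfl),
    (Indep_iff _ _ _).1 h₁₂ _ _ hF hG, mul_assoc]
  exact ((ENNReal.eq_div_iff hF₀ (measure_ne_top _ _)).2 rfl).symm

theorem tpr_ratio_representation_general
    {Ω : Type*} [MeasurableSpace Ω] (P : Measure Ω) [IsProbabilityMeasure P]
    (T D Nj Nk : Ω → ℝ)
    (Δj Δk : Ω → ℝ)
    (hΔj : ∀ ω, Δj ω = if T ω ≤ Nj ω then 1 else 0)
    (hΔk : ∀ ω, Δk ω = if T ω ≤ Nk ω then 1 else 0)
    (E : Set Ω)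
    (s τ : ℝ)
    (hIndepPair : IndepFun (fun ω => (Nj ω, Nk ω)) (fun ω => (T ω, D ω)) P)
    (hIndepE : Indep
      (MeasurableSpace.comap (fun ω => (T ω, D ω, Nj ω, Nk ω)) inferInstance)
      (MeasurableSpace.generateFrom {E}) P)
    (hposNE : 0 < P ({ω | Nj ω = s} ∩ {ω | Nk ω = s + τ} ∩ E)) :
    P ({ω | D ω = 1} ∩ {ω | s < T ω ∧ T ω ≤ s + τ}) / P {ω | s < T ω ∧ T ω ≤ s + τ}
      = (P (({ω | D ω = 1} ∩ {ω | Δj ω = 0} ∩ {ω | Δk ω = 1} ∩ E) ∩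
              ({ω | Nj ω = s} ∩ {ω | Nk ω = s + τ})) /
            P ({ω | Nj ω = s} ∩ {ω | Nk ω = s + τ})) /
        (P (({ω | Δj ω = 0} ∩ {ω | Δk ω = 1} ∩ E) ∩
              ({ω | Nj ω = s} ∩ {ω | Nk ω = s + τ})) /
            P ({ω | Nj ω = s} ∩ {ω | Nk ω = s + τ})) := by
  set N := {ω | Nj ω = s} ∩ {ω | Nk ω = s + τ}
  set A := {ω | s < T ω ∧ T ω ≤ s + τ}
  have hN : P N ≠ 0 := (hposNE.trans_le (measure_mono Set.inter_subset_left)).ne'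
  have hE : P E ≠ 0 := (hposNE.trans_le (measure_mono Set.inter_subset_right)).ne'
  have cond_eq : ∀ G, MeasurableSet[MeasurableSpace.comap (fun ω => (T ω, D ω)) inferInstance] G →
      P (N ∩ G ∩ E) / P N = P G * P E := fun G hG =>
    measure_inter_inter_div_eq_mul_of_indep hIndepPair hIndepE
      (MeasurableSpace.comap_le_comap_of_eq_comp (fun p : ℝ × ℝ × ℝ × ℝ => (p.2.2.1, p.2.2.2))
        (by fun_prop) rfl)
      (MeasurableSpace.comap_le_comap_of_eq_comp (fun p : ℝ × ℝ × ℝ × ℝ => (p.1, p.2.1))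
        (by fun_prop) rfl)
      ⟨{(s, s + τ)}, measurableSet_singleton _, by ext; simp [N]⟩ hG hN
  have pattern : ∀ ω ∈ N, (Δj ω = 0 ∧ Δk ω = 1 ↔ ω ∈ A) := by
    rintro ω ⟨hj : Nj ω = s, hk : Nk ω = s + τ⟩
    rw [hΔj, hΔk, hj, hk]
    exact ite_le_eq_zero_and_ite_le_eq_one_iff
  obtain ⟨num, den⟩ : ({ω | D ω = 1} ∩ {ω | Δj ω = 0} ∩ {ω | Δk ω = 1} ∩ E) ∩ N
        = N ∩ ({ω | D ω = 1} ∩ A) ∩ E ∧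
      ({ω | Δj ω = 0} ∩ {ω | Δk ω = 1} ∩ E) ∩ N = N ∩ A ∩ E := by
    constructor <;> ext ω <;> have := pattern ω <;>
      simp only [Set.mem_inter_iff, Set.mem_ofPred_eq] at this ⊢ <;> tauto
  rw [num, den,
    cond_eq _ ⟨Set.Ioc s (s + τ) ×ˢ {1}, measurableSet_Ioc.prod (measurableSet_singleton _), by
      ext; simp [A, and_comm]⟩,
    cond_eq _ ⟨Set.Ioc s (s + τ) ×ˢ Set.univ, measurableSet_Ioc.prod .univ, by ext; simp [A]⟩,
    ENNReal.mul_div_mul_right _ _ hE (measure_ne_top _ _)]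

/-- ratio representation of the true positive rate
`TPR(d_s; s, τ) = P(D = 1 ∣ s < T ≤ s + τ)` from observed adjacent
negative-positive biopsy pairs. -/
theorem tpr_ratio_representation
    {Ω : Type*} [MeasurableSpace Ω] (P : Measure Ω) [IsProbabilityMeasure P]
    (T D Nj Nk : Ω → ℝ)
    (hT : Measurable T) (hD : Measurable D) (hNj : Measurable Nj) (hNk : Measurable Nk)
    (hDval : ∀ ω, D ω = 1 ∨ D ω = -1)
    (hlt : ∀ᵐ ω ∂P, Nj ω < Nk ω)
    (Δj Δk : Ω → ℝ)
    (hΔj : ∀ ω, Δj ω = if T ω ≤ Nj ω then 1 else 0)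
    (hΔk : ∀ ω, Δk ω = if T ω ≤ Nk ω then 1 else 0)
    (E : Set Ω) (hE : MeasurableSet E)
    (s τ : ℝ) (hs : 0 ≤ s) (hτ : 0 < τ)
    (hIndepPair : IndepFun (fun ω => (Nj ω, Nk ω)) (fun ω => (T ω, D ω)) P)
    (hIndepE : Indep
      (MeasurableSpace.comap (fun ω => (T ω, D ω, Nj ω, Nk ω)) inferInstance)
      (MeasurableSpace.generateFrom {E}) P)
    (hposN : 0 < P ({ω | Nj ω = s} ∩ {ω | Nk ω = s + τ}))
    (hposNE : 0 < P ({ω | Nj ω = s} ∩ {ω | Nk ω = s + τ} ∩ E))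
    (hposT : 0 < P {ω | s < T ω ∧ T ω ≤ s + τ}) :
    P ({ω | D ω = 1} ∩ {ω | s < T ω ∧ T ω ≤ s + τ}) / P {ω | s < T ω ∧ T ω ≤ s + τ}
      = (P (({ω | D ω = 1} ∩ {ω | Δj ω = 0} ∩ {ω | Δk ω = 1} ∩ E) ∩
              ({ω | Nj ω = s} ∩ {ω | Nk ω = s + τ})) /
            P ({ω | Nj ω = s} ∩ {ω | Nk ω = s + τ})) /
        (P (({ω | Δj ω = 0} ∩ {ω | Δk ω = 1} ∩ E) ∩
              ({ω | Nj ω = s} ∩ {ω | Nk ω = s + τ})) /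
            P ({ω | Nj ω = s} ∩ {ω | Nk ω = s + τ})) :=
  tpr_ratio_representation_general P T D Nj Nk Δj Δk hΔj hΔk E s τ hIndepPair hIndepE hposNE
end

section
/- Let (Ω, 𝓕, P) be a probability space, T : Ω → ℝ a random variable, D : Ω → {−1, 1} a random variable, and N_k : Ω → ℝ a random variable; set Δ_k = 1{T ≤ N_k}. Let E ∈ 𝓕 be an event. Assume N_k is independent of (T, D), E is independent of the σ-algebra generated by (T, D, N_k), and P({N_k = t} ∩ E) > 0 for a given t ≥ 0. Then P(D = −1, T > t) = P(D = −1, Δ_k = 0 ∣ N_k = t, E). -/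
open MeasureTheory ProbabilityTheory
open scoped ENNReal

/-- identifiability of `P(D = -1, T > t)` from an observed negative biopsy. -/
theorem negative_biopsy_identifiability
    {Ω : Type*} [MeasurableSpace Ω] (P : Measure Ω) [IsProbabilityMeasure P]
    (T D Nk : Ω → ℝ)
    (hT : Measurable T) (hD : Measurable D) (hNk : Measurable Nk)
    (hDval : ∀ ω, D ω = 1 ∨ D ω = -1)
    (Δk : Ω → ℝ)
    (hΔk : ∀ ω, Δk ω = if T ω ≤ Nk ω then 1 else 0)
    (E : Set Ω) (hE : MeasurableSet E)
    (t : ℝ) (ht : 0 ≤ t)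
    (hIndep : IndepFun Nk (fun ω => (T ω, D ω)) P)
    (hIndepE : Indep
      (MeasurableSpace.comap (fun ω => (T ω, D ω, Nk ω)) inferInstance)
      (MeasurableSpace.generateFrom {E}) P)
    (hpos : 0 < P ({ω | Nk ω = t} ∩ E)) :
    P ({ω | D ω = -1} ∩ {ω | t < T ω})
      = P (({ω | D ω = -1} ∩ {ω | Δk ω = 0}) ∩ ({ω | Nk ω = t} ∩ E)) /
          P ({ω | Nk ω = t} ∩ E) := by
  set f : Ω → ℝ × ℝ × ℝ := fun ω => (T ω, D ω, Nk ω) with hf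
  -- rewrite the numerator event
  have hset : ({ω | D ω = -1} ∩ {ω | Δk ω = 0}) ∩ ({ω | Nk ω = t} ∩ E)
      = (({ω | D ω = -1} ∩ {ω | t < T ω}) ∩ {ω | Nk ω = t}) ∩ E := by
    ext ω
    simp only [Set.mem_inter_iff, Set.mem_setOf_eq, hΔk ω]
    constructor
    · rintro ⟨⟨hd, hδ⟩, hn, he⟩
      have : ¬ T ω ≤ Nk ω := by
        intro h; simp [h] at hδ
      exact ⟨⟨⟨hd, by rw [hn] at this; linarith [not_le.mp this]⟩, hn⟩, he⟩
    · rintro ⟨⟨⟨hd, hT'⟩, hn⟩, he⟩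
      have : ¬ T ω ≤ Nk ω := by rw [hn]; linarith
      exact ⟨⟨hd, by simp [this]⟩, hn, he⟩
  -- measurable sets in ℝ³
  have hS1 : MeasurableSet {p : ℝ × ℝ × ℝ | p.2.1 = -1 ∧ t < p.1 ∧ p.2.2 = t} := by
    have h1 : MeasurableSet {p : ℝ × ℝ × ℝ | p.2.1 = -1} :=
      measurableSet_eq_fun measurable_snd.fst measurable_const
    have h2 : MeasurableSet {p : ℝ × ℝ × ℝ | t < p.1} :=
      measurableSet_lt measurable_const measurable_fst
    have h3 : MeasurableSet {p : ℝ × ℝ × ℝ | p.2.2 = t} :=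
      measurableSet_eq_fun measurable_snd.snd measurable_const
    exact h1.inter (h2.inter h3)
  have hS2 : MeasurableSet {p : ℝ × ℝ × ℝ | p.2.2 = t} :=
    measurableSet_eq_fun measurable_snd.snd measurable_const
  have hEm : MeasurableSet[MeasurableSpace.generateFrom {E}] E :=
    MeasurableSpace.measurableSet_generateFrom rfl
  -- independence with E
  have hnum : P ((({ω | D ω = -1} ∩ {ω | t < T ω}) ∩ {ω | Nk ω = t}) ∩ E)
      = P (({ω | D ω = -1} ∩ {ω | t < T ω}) ∩ {ω | Nk ω = t}) * P E := by
    have h1 : MeasurableSet[MeasurableSpace.comap f inferInstance]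
        (({ω | D ω = -1} ∩ {ω | t < T ω}) ∩ {ω | Nk ω = t}) := by
      refine ⟨{p : ℝ × ℝ × ℝ | p.2.1 = -1 ∧ t < p.1 ∧ p.2.2 = t}, hS1, ?_⟩
      ext ω; simp only [hf, Set.mem_preimage, Set.mem_setOf_eq, Set.mem_inter_iff]; tauto
    exact ((Indep_iff _ _ _).1 hIndepE) _ _ h1 hEm
  have hden : P ({ω | Nk ω = t} ∩ E) = P {ω | Nk ω = t} * P E := by
    have h1 : MeasurableSet[MeasurableSpace.comap f inferInstance] {ω | Nk ω = t} := by
      refine ⟨{p : ℝ × ℝ × ℝ | p.2.2 = t}, hS2, ?_⟩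
      ext ω; simp [hf, Set.mem_setOf_eq]
    exact ((Indep_iff _ _ _).1 hIndepE) _ _ h1 hEm
  -- independence of Nk with (T, D)
  have hTD : P (({ω | D ω = -1} ∩ {ω | t < T ω}) ∩ {ω | Nk ω = t})
      = P ({ω | D ω = -1} ∩ {ω | t < T ω}) * P {ω | Nk ω = t} := by
    have := hIndep.measure_inter_preimage_eq_mul ({t} : Set ℝ)
      {p : ℝ × ℝ | t < p.1 ∧ p.2 = -1} (measurableSet_singleton t)
      ((measurableSet_lt measurable_const measurable_fst).inter
        (measurableSet_eq_fun measurable_snd measurable_const))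
    have e1 : Nk ⁻¹' ({t} : Set ℝ) = {ω | Nk ω = t} := by ext ω; simp
    have e2 : (fun ω => (T ω, D ω)) ⁻¹' {p : ℝ × ℝ | t < p.1 ∧ p.2 = -1}
        = {ω | D ω = -1} ∩ {ω | t < T ω} := by
      ext ω; simp [Set.mem_setOf_eq]; tauto
    rw [e1, e2] at this
    rw [Set.inter_comm, this, mul_comm]
  -- combine
  have hne : P ({ω | Nk ω = t} ∩ E) ≠ 0 := hpos.ne'
  have hfin : P ({ω | Nk ω = t} ∩ E) ≠ ∞ := measure_ne_top P _
  rw [hset, hnum, hTD, hden]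
  rw [← hden, mul_assoc, ← hden]
  exact (ENNReal.eq_div_iff hne hfin).2 (mul_comm _ _)
end

section
/- Let (Ω, 𝓕, P) be a probability space, T : Ω → ℝ a random variable, D : Ω → {−1, 1} a random variable, and N_j, N_k : Ω → ℝ random variables with N_j < N_k almost surely; set Δ_j = 1{T ≤ N_j} and Δ_k = 1{T ≤ N_k}. Let E ∈ 𝓕 be an event. Assume (N_j, N_k) is independent of (T, D), E is independent of the σ-algebra generated by (T, D, N_j, N_k), P({N_j = s} ∩ {N_k = s + τ} ∩ E) > 0, and P(T > s) > 0, for given s ≥ 0 and τ > 0. Then P(Δ_j = 0 ∣ N_j = s, N_k = s + τ, E) = P(T > s), and the conditional event prevalence ρ(s; τ) = P(s < T ≤ s + τ ∣ T > s) satisfies ρ(s; τ) = P(Δ_j = 0, Δ_k = 1 ∣ N_j = s, N_k = s + τ, E) / P(Δ_j = 0 ∣ N_j = s, N_k = s + τ, E). -/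
open MeasureTheory ProbabilityTheory
open scoped ENNReal

/-- identifiability of the conditional event prevalence
`ρ(s; τ) = P(s < T ≤ s + τ ∣ T > s)` from observed adjacent biopsy pairs. -/
theorem prevalence_identifiability
    {Ω : Type*} [MeasurableSpace Ω] (P : Measure Ω) [IsProbabilityMeasure P]
    (T D Nj Nk : Ω → ℝ)
    (hT : Measurable T) (hD : Measurable D) (hNj : Measurable Nj) (hNk : Measurable Nk)
    (hDval : ∀ ω, D ω = 1 ∨ D ω = -1)
    (hlt : ∀ᵐ ω ∂P, Nj ω < Nk ω)
    (Δj Δk : Ω → ℝ)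
    (hΔj : ∀ ω, Δj ω = if T ω ≤ Nj ω then 1 else 0)
    (hΔk : ∀ ω, Δk ω = if T ω ≤ Nk ω then 1 else 0)
    (E : Set Ω) (hE : MeasurableSet E)
    (s τ : ℝ) (hs : 0 ≤ s) (hτ : 0 < τ)
    (hIndepPair : IndepFun (fun ω => (Nj ω, Nk ω)) (fun ω => (T ω, D ω)) P)
    (hIndepE : Indep
      (MeasurableSpace.comap (fun ω => (T ω, D ω, Nj ω, Nk ω)) inferInstance)
      (MeasurableSpace.generateFrom {E}) P)
    (hpos : 0 < P ({ω | Nj ω = s} ∩ {ω | Nk ω = s + τ} ∩ E))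
    (hposT : 0 < P {ω | s < T ω}) :
    P ({ω | Δj ω = 0} ∩ ({ω | Nj ω = s} ∩ {ω | Nk ω = s + τ} ∩ E)) /
        P ({ω | Nj ω = s} ∩ {ω | Nk ω = s + τ} ∩ E)
      = P {ω | s < T ω} ∧
    P ({ω | s < T ω ∧ T ω ≤ s + τ} ∩ {ω | s < T ω}) / P {ω | s < T ω}
      = (P (({ω | Δj ω = 0} ∩ {ω | Δk ω = 1}) ∩
              ({ω | Nj ω = s} ∩ {ω | Nk ω = s + τ} ∩ E)) /
            P ({ω | Nj ω = s} ∩ {ω | Nk ω = s + τ} ∩ E)) /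
        (P ({ω | Δj ω = 0} ∩ ({ω | Nj ω = s} ∩ {ω | Nk ω = s + τ} ∩ E)) /
            P ({ω | Nj ω = s} ∩ {ω | Nk ω = s + τ} ∩ E)) := by
  classical
  set A : Set Ω := {ω | Nj ω = s} ∩ {ω | Nk ω = s + τ} with hA
  -- key factorization
  have key : ∀ B : Set ℝ, MeasurableSet B →
      P ((T ⁻¹' B ∩ A) ∩ E) = P (T ⁻¹' B) * (P A * P E) := by
    intro B hB
    have hrepr : T ⁻¹' B ∩ A
        = (fun ω => (T ω, D ω, Nj ω, Nk ω)) ⁻¹'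
            (B ×ˢ (Set.univ ×ˢ ({s} ×ˢ {s + τ}))) := by
      ext ω
      simp only [Set.mem_inter_iff, Set.mem_preimage, Set.mem_prod,
        Set.mem_univ, Set.mem_singleton_iff, Set.mem_setOf_eq, true_and, A, and_assoc]
    have h1 : MeasurableSet[MeasurableSpace.comap
        (fun ω => (T ω, D ω, Nj ω, Nk ω)) inferInstance] (T ⁻¹' B ∩ A) :=
      ⟨B ×ˢ (Set.univ ×ˢ ({s} ×ˢ {s + τ})),
        hB.prod (MeasurableSet.univ.prod ((measurableSet_singleton s).prod
          (measurableSet_singleton (s + τ)))), hrepr.symm⟩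
    have h2 : MeasurableSet[MeasurableSpace.generateFrom {E}] E :=
      MeasurableSpace.measurableSet_generateFrom rfl
    have hfac1 : P ((T ⁻¹' B ∩ A) ∩ E) = P (T ⁻¹' B ∩ A) * P E :=
      (hIndepE.indepSet_of_measurableSet h1 h2).measure_inter_eq_mul
    have hA' : A = (fun ω => (Nj ω, Nk ω)) ⁻¹' {(s, s + τ)} := by
      ext ω; simp [A, Prod.ext_iff]
    have hTB : T ⁻¹' B = (fun ω => (T ω, D ω)) ⁻¹' (B ×ˢ Set.univ) := by
      ext ω; simp
    have hfac2 : P (A ∩ T ⁻¹' B) = P A * P (T ⁻¹' B) := by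
      rw [hA', hTB]
      exact hIndepPair.measure_inter_preimage_eq_mul _ _ (measurableSet_singleton _)
        (hB.prod MeasurableSet.univ)
    rw [hfac1, Set.inter_comm (T ⁻¹' B) A, hfac2]
    ring
  have hAE : P (A ∩ E) = P A * P E := by
    have := key Set.univ MeasurableSet.univ
    simpa using this
  set q : ℝ≥0∞ := P A * P E with hq
  have hq0 : q ≠ 0 := hAE ▸ hpos.ne'
  have hqtop : q ≠ ∞ := hAE ▸ (measure_ne_top P _)
  -- set identities
  have hS1 : {ω | Δj ω = 0} ∩ (A ∩ E) = (T ⁻¹' Set.Ioi s ∩ A) ∩ E := by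
    ext ω
    simp only [Set.mem_inter_iff, Set.mem_setOf_eq, Set.mem_preimage, Set.mem_Ioi, hΔj ω, A]
    constructor
    · rintro ⟨h0, ⟨hj, hk⟩, hEω⟩
      have hle : ¬ (T ω ≤ Nj ω) := by
        intro h; rw [if_pos h] at h0; norm_num at h0
      exact ⟨⟨by rw [← hj]; exact lt_of_not_ge hle, hj, hk⟩, hEω⟩
    · rintro ⟨⟨hTω, hj, hk⟩, hEω⟩
      exact ⟨if_neg (not_le.mpr (by rw [hj]; exact hTω)), ⟨hj, hk⟩, hEω⟩
  have hS2 : ({ω | Δj ω = 0} ∩ {ω | Δk ω = 1}) ∩ (A ∩ E)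
      = (T ⁻¹' Set.Ioc s (s + τ) ∩ A) ∩ E := by
    ext ω
    simp only [Set.mem_inter_iff, Set.mem_setOf_eq, Set.mem_preimage, Set.mem_Ioc,
      hΔj ω, hΔk ω, A]
    constructor
    · rintro ⟨⟨h0, h1⟩, ⟨hj, hk⟩, hEω⟩
      have hj' : ¬ (T ω ≤ Nj ω) := by
        intro h; rw [if_pos h] at h0; norm_num at h0
      have hk' : T ω ≤ Nk ω := by
        by_contra h; rw [if_neg h] at h1; norm_num at h1
      exact ⟨⟨⟨by rw [← hj]; exact lt_of_not_ge hj', by rw [← hk]; exact hk'⟩, hj, hk⟩, hEω⟩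
    · rintro ⟨⟨hTω, hj, hk⟩, hEω⟩
      exact ⟨⟨if_neg (not_le.mpr (by rw [hj]; exact hTω.1)),
        if_pos (by rw [hk]; exact hTω.2)⟩, ⟨hj, hk⟩, hEω⟩
  have hIoi : {ω | s < T ω} = T ⁻¹' Set.Ioi s := rfl
  have hIoc : {ω | s < T ω ∧ T ω ≤ s + τ} = T ⁻¹' Set.Ioc s (s + τ) := rfl
  have hgoalA : {ω | Nj ω = s} ∩ {ω | Nk ω = s + τ} ∩ E = A ∩ E := rfl
  have hnum1 : P ({ω | Δj ω = 0} ∩ (A ∩ E)) = P (T ⁻¹' Set.Ioi s) * q := by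
    rw [hS1, key _ measurableSet_Ioi]
  have hnum2 : P (({ω | Δj ω = 0} ∩ {ω | Δk ω = 1}) ∩ (A ∩ E))
      = P (T ⁻¹' Set.Ioc s (s + τ)) * q := by
    rw [hS2, key _ measurableSet_Ioc]
  have hdenom : P (A ∩ E) = q := hAE
  have half1 : P ({ω | Δj ω = 0} ∩ (A ∩ E)) / P (A ∩ E) = P (T ⁻¹' Set.Ioi s) := by
    rw [hnum1, hdenom, mul_div_assoc, ENNReal.div_self hq0 hqtop, mul_one]
  have half2 : P (({ω | Δj ω = 0} ∩ {ω | Δk ω = 1}) ∩ (A ∩ E)) / P (A ∩ E)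
      = P (T ⁻¹' Set.Ioc s (s + τ)) := by
    rw [hnum2, hdenom, mul_div_assoc, ENNReal.div_self hq0 hqtop, mul_one]
  constructor
  · rw [hgoalA, half1, hIoi]
  · rw [hgoalA, half1, half2, hIoi, hIoc]
    congr 1
    rw [Set.inter_eq_left.mpr]
    intro ω hω
    exact hω.1
end

section
/- Let (Ω, 𝓕, P) be a probability space, T : Ω → ℝ a random variable, and D : Ω → {−1, 1} a random variable. Fix s ≥ 0, τ > 0, and r > 0, with P(T > s) > 0, P(s < T ≤ s + τ) > 0, and P(T > s + τ) > 0. Define ρ = P(s < T ≤ s + τ ∣ T > s), TPR = P(D = 1 ∣ s < T ≤ s + τ), TNR = P(D = −1 ∣ T > s + τ), and ξ = (1 − ρ)/(ρ r); assume 0 < ρ < 1 and TPR > 0. Then P(D = 1, T > s + τ) / P(D = 1, s < T ≤ s + τ) ≤ r if and only if TPR + ξ · TNR ≥ ξ. -/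
open MeasureTheory ProbabilityTheory
open scoped ENNReal

/-!
Write `A = {s < T ≤ s + τ}`, `B = {T > s + τ}` and `a = P(D = 1, A)`, `b = P(D = 1, B)`,
`c = P(D = -1, B)`. Since `{T > s} = A ⊔ B` and `B = {D = 1, B} ⊔ {D = -1, B}`, we get
`ρ = P(A) / (P(A) + P(B))`, hence `ξ = P(B) / (P(A) r)`, and `b + c = P(B)`. Multiplying by
`P(A) r > 0`, the weighted benefit inequality `ξ ≤ a / P(A) + ξ c / P(B)` becomes
`b + c ≤ a r + c`, i.e. `b / a ≤ r`.
-/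

open Set

section Sets

variable {Ω α : Type*}

theorem setOf_lt_eq_union [LinearOrder α] (f : Ω → α) {a b : α} (hab : a ≤ b) :
    {ω | a < f ω} = {ω | a < f ω ∧ f ω ≤ b} ∪ {ω | b < f ω} :=
  congrArg (f ⁻¹' ·) (Ioc_union_Ioi_eq_Ioi hab).symm

theorem disjoint_setOf_Ioc_setOf_lt [LinearOrder α] (f : Ω → α) (a b : α) :
    Disjoint {ω | a < f ω ∧ f ω ≤ b} {ω | b < f ω} :=
  Ioc_disjoint_Ioi_same.preimage f

theorem setOf_eq_eq_compl_of_forall_eq_or_eq {f : Ω → α} {x y : α} (hxy : x ≠ y)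
    (hf : ∀ ω, f ω = x ∨ f ω = y) : {ω | f ω = y} = {ω | f ω = x}ᶜ := by
  ext ω
  rcases hf ω with h | h <;> simp [h, hxy, hxy.symm]

end Sets

theorem measureReal_inter_add_compl_inter {Ω : Type*} [MeasurableSpace Ω] (μ : Measure Ω)
    [IsFiniteMeasure μ] {s : Set Ω} (hs : MeasurableSet s) (t : Set Ω) :
    μ.real (s ∩ t) + μ.real (sᶜ ∩ t) = μ.real t := by
  rw [inter_comm s, inter_comm sᶜ, ← sdiff_eq, measureReal_inter_add_sdiff hs]

theorem one_sub_div_add_div_mul {p q : ℝ} (hpq : p + q ≠ 0) (r : ℝ) :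
    (1 - p / (p + q)) / (p / (p + q) * r) = q / (p * r) := by
  field_simp
  ring

theorem div_le_iff_div_le_add_div_mul_div {a b c p q r : ℝ} (ha : 0 < a) (hp : 0 < p)
    (hq : q ≠ 0) (hr : 0 < r) (hbc : b + c = q) :
    b / a ≤ r ↔ q / (p * r) ≤ a / p + q / (p * r) * (c / q) := by
  have hscaled : (a / p + q / (p * r) * (c / q)) * (p * r) = a * r + c := by
    field_simp
  rw [div_le_iff₀ ha, div_le_iff₀ (by positivity), hscaled, ← hbc, add_le_add_iff_right,
    mul_comm r]

theorem cost_effectiveness_iff_weighted_benefit_general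
    {Ω : Type*} [MeasurableSpace Ω] (P : Measure Ω) [IsProbabilityMeasure P]
    (T D : Ω → ℝ)
    (hT : Measurable T) (hD : Measurable D)
    (hDval : ∀ ω, D ω = 1 ∨ D ω = -1)
    (s τ r : ℝ) (hτ : 0 < τ) (hr : 0 < r)
    (hpos₂ : 0 < P {ω | s < T ω ∧ T ω ≤ s + τ})
    (hpos₃ : 0 < P {ω | s + τ < T ω})
    (ρ TPR TNR ξ : ℝ)
    (hρ : ρ = (P ({ω | s < T ω ∧ T ω ≤ s + τ} ∩ {ω | s < T ω})).toReal /
        (P {ω | s < T ω}).toReal)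
    (hTPR : TPR = (P ({ω | D ω = 1} ∩ {ω | s < T ω ∧ T ω ≤ s + τ})).toReal /
        (P {ω | s < T ω ∧ T ω ≤ s + τ}).toReal)
    (hTNR : TNR = (P ({ω | D ω = -1} ∩ {ω | s + τ < T ω})).toReal /
        (P {ω | s + τ < T ω}).toReal)
    (hξ : ξ = (1 - ρ) / (ρ * r))
    (hTPRpos : 0 < TPR) :
    (P ({ω | D ω = 1} ∩ {ω | s + τ < T ω})).toReal /
        (P ({ω | D ω = 1} ∩ {ω | s < T ω ∧ T ω ≤ s + τ})).toReal ≤ r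
      ↔ ξ ≤ TPR + ξ * TNR := by
  simp only [← measureReal_def] at *
  have hA : 0 < P.real {ω | s < T ω ∧ T ω ≤ s + τ} := ENNReal.toReal_pos hpos₂.ne' (by simp)
  have hB : 0 < P.real {ω | s + τ < T ω} := ENNReal.toReal_pos hpos₃.ne' (by simp)
  have hρ' : ρ = P.real {ω | s < T ω ∧ T ω ≤ s + τ} /
      (P.real {ω | s < T ω ∧ T ω ≤ s + τ} + P.real {ω | s + τ < T ω}) := by
    rw [hρ, inter_eq_left.mpr fun ω hω ↦ hω.1, setOf_lt_eq_union T (by linarith : s ≤ s + τ),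
      measureReal_union (disjoint_setOf_Ioc_setOf_lt T _ _) (hT measurableSet_Ioi)]
  have hsplit : P.real ({ω | D ω = 1} ∩ {ω | s + τ < T ω}) +
      P.real ({ω | D ω = -1} ∩ {ω | s + τ < T ω}) = P.real {ω | s + τ < T ω} := by
    rw [setOf_eq_eq_compl_of_forall_eq_or_eq (by norm_num) hDval]
    exact measureReal_inter_add_compl_inter P (hD (measurableSet_singleton 1)) _
  have ha := (div_pos_iff_of_pos_right hA).mp (hTPR ▸ hTPRpos)
  rw [hξ, hρ', one_sub_div_add_div_mul (by positivity), hTPR, hTNR]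
  exact div_le_iff_div_le_add_div_mul_div ha hA hB.ne' hr hsplit

/-- cost-effectiveness (at most `r` unnecessary biopsies per event caught)
is equivalent to the weighted benefit `TPR + ξ·TNR` exceeding the threshold `ξ`,
where `ξ = (1 - ρ)/(ρ r)`. -/
theorem cost_effectiveness_iff_weighted_benefit
    {Ω : Type*} [MeasurableSpace Ω] (P : Measure Ω) [IsProbabilityMeasure P]
    (T D : Ω → ℝ)
    (hT : Measurable T) (hD : Measurable D)
    (hDval : ∀ ω, D ω = 1 ∨ D ω = -1)
    (s τ r : ℝ) (hs : 0 ≤ s) (hτ : 0 < τ) (hr : 0 < r)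
    (hpos₁ : 0 < P {ω | s < T ω})
    (hpos₂ : 0 < P {ω | s < T ω ∧ T ω ≤ s + τ})
    (hpos₃ : 0 < P {ω | s + τ < T ω})
    (ρ TPR TNR ξ : ℝ)
    (hρ : ρ = (P ({ω | s < T ω ∧ T ω ≤ s + τ} ∩ {ω | s < T ω})).toReal /
        (P {ω | s < T ω}).toReal)
    (hTPR : TPR = (P ({ω | D ω = 1} ∩ {ω | s < T ω ∧ T ω ≤ s + τ})).toReal /
        (P {ω | s < T ω ∧ T ω ≤ s + τ}).toReal)
    (hTNR : TNR = (P ({ω | D ω = -1} ∩ {ω | s + τ < T ω})).toReal /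
        (P {ω | s + τ < T ω}).toReal)
    (hξ : ξ = (1 - ρ) / (ρ * r))
    (hρ0 : 0 < ρ) (hρ1 : ρ < 1) (hTPRpos : 0 < TPR) :
    (P ({ω | D ω = 1} ∩ {ω | s + τ < T ω})).toReal /
        (P ({ω | D ω = 1} ∩ {ω | s < T ω ∧ T ω ≤ s + τ})).toReal ≤ r
      ↔ ξ ≤ TPR + ξ * TNR :=
  cost_effectiveness_iff_weighted_benefit_general P T D hT hD hDval s τ r hτ hr hpos₂ hpos₃ ρ TPR
    TNR ξ hρ hTPR hTNR hξ hTPRpos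
end

section
/- Let (Ω, 𝓕, P) be a probability space, Z : Ω → 𝒵 a measurable map into a measurable space 𝒵, and W₁, W₂ : Ω → ℝ integrable nonnegative random variables. Let h : 𝒵 → ℝ be a measurable function such that h(Z) is a version of the conditional expectation E[W₁ − W₂ ∣ σ(Z)]. Define d* : 𝒵 → {−1, 1} by d*(z) = 1 if h(z) ≥ 0 and d*(z) = −1 otherwise. Then for every measurable d : 𝒵 → {−1, 1}, E[1{d*(Z) = 1} W₁ + 1{d*(Z) = −1} W₂] ≥ E[1{d(Z) = 1} W₁ + 1{d(Z) = −1} W₂]. -/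
open MeasureTheory ProbabilityTheory

/-- Weighted benefit of a decision rule `d` applied to the covariates `Z`:
`E[1{d(Z) = 1} W₁ + 1{d(Z) = -1} W₂]`. -/
noncomputable def ruleGain {Ω 𝒵 : Type*} [MeasurableSpace Ω] (P : Measure Ω)
    (W₁ W₂ : Ω → ℝ) (Z : Ω → 𝒵) (d : 𝒵 → ℝ) : ℝ :=
  ∫ ω, {x | d (Z x) = 1}.indicator W₁ ω + {x | d (Z x) = -1}.indicator W₂ ω ∂P

/-! Since `d` takes only the values `±1`, the gain of `d` is `E[W₂] + E[1{d(Z) = 1} (W₁ - W₂)]`.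
The event `{d(Z) = 1}` is `σ(Z)`-measurable, so `W₁ - W₂` may be replaced there by its
conditional expectation `h(Z)`; and among all events, `∫ h(Z)` is largest over `{h(Z) ≥ 0}`,
which is exactly the event on which `d*` selects `1`. -/

theorem integral_indicator_add_indicator_compl {Ω E : Type*} [MeasurableSpace Ω]
    [NormedAddCommGroup E] [NormedSpace ℝ E] {μ : Measure Ω} {s : Set Ω} (hs : MeasurableSet s)
    {f g : Ω → E} (hf : Integrable f μ) (hg : Integrable g μ) :
    ∫ ω, s.indicator f ω + sᶜ.indicator g ω ∂μ = ∫ ω, g ω ∂μ + ∫ ω in s, f ω - g ω ∂μ := by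
  have hpointwise : (fun ω => s.indicator f ω + sᶜ.indicator g ω)
      = fun ω => g ω + s.indicator (f - g) ω := by
    ext ω
    by_cases hω : ω ∈ s <;> simp [hω]
  rw [hpointwise, integral_add hg ((hf.sub hg).indicator hs), integral_indicator hs]
  rfl

theorem setIntegral_eq_of_ae_eq_condExp {Ω E : Type*} [NormedAddCommGroup E] [NormedSpace ℝ E]
    [CompleteSpace E] {m m₀ : MeasurableSpace Ω} {μ : Measure[m₀] Ω} (hm : m ≤ m₀)
    [SigmaFinite (μ.trim hm)] {f g : Ω → E} (hf : Integrable f μ) (hg : g =ᵐ[μ] μ[f | m])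
    {s : Set Ω} (hs : MeasurableSet[m] s) :
    ∫ ω in s, g ω ∂μ = ∫ ω in s, f ω ∂μ := by
  rw [← setIntegral_condExp hm hf hs]
  exact setIntegral_congr_ae (hm s hs) (hg.mono fun _ hω _ => hω)

theorem ruleGain_eq_integral_add_setIntegral {Ω 𝒵 : Type*} [MeasurableSpace Ω]
    [MeasurableSpace 𝒵] (P : Measure Ω) [IsFiniteMeasure P] {Z : Ω → 𝒵} (hZ : Measurable Z)
    {W₁ W₂ : Ω → ℝ} (hW₁ : Integrable W₁ P) (hW₂ : Integrable W₂ P) {h : 𝒵 → ℝ}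
    (hcond : (fun ω => h (Z ω))
      =ᵐ[P] P[fun ω => W₁ ω - W₂ ω | MeasurableSpace.comap Z inferInstance])
    {d : 𝒵 → ℝ} (hd : MeasurableSet {z | d z = 1}) (hd₁ : ∀ z, d z = 1 ∨ d z = -1) :
    ruleGain P W₁ W₂ Z d = ∫ ω, W₂ ω ∂P + ∫ ω in {x | d (Z x) = 1}, h (Z ω) ∂P := by
  have hcompl : {x | d (Z x) = -1} = {x | d (Z x) = 1}ᶜ := by
    ext x
    rcases hd₁ (Z x) with hx | hx <;> simp [hx] <;> norm_num
  have hdZ : MeasurableSet[MeasurableSpace.comap Z inferInstance] {x | d (Z x) = 1} :=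
    ⟨_, hd, rfl⟩
  rw [ruleGain, hcompl, integral_indicator_add_indicator_compl (hZ.comap_le _ hdZ) hW₁ hW₂,
    setIntegral_eq_of_ae_eq_condExp hZ.comap_le (hW₁.sub hW₂) hcond hdZ]
  rfl

theorem optimal_rule_is_sign_of_conditional_expectation_general
    {Ω 𝒵 : Type*} [MeasurableSpace Ω] [MeasurableSpace 𝒵]
    (P : Measure Ω) [IsProbabilityMeasure P]
    (Z : Ω → 𝒵) (hZ : Measurable Z)
    (W₁ W₂ : Ω → ℝ)
    (hW₁ : Integrable W₁ P) (hW₂ : Integrable W₂ P)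
    (h : 𝒵 → ℝ) (hh : Measurable h)
    (hcond : (fun ω => h (Z ω))
      =ᵐ[P] P[fun ω => W₁ ω - W₂ ω | MeasurableSpace.comap Z inferInstance])
    (dstar : 𝒵 → ℝ) (hdstar : ∀ z, dstar z = if 0 ≤ h z then 1 else -1) :
    ∀ d : 𝒵 → ℝ, Measurable d → (∀ z, d z = 1 ∨ d z = -1) →
      ruleGain P W₁ W₂ Z d ≤ ruleGain P W₁ W₂ Z dstar := by
  intro d hd hd₁
  have hd_set : MeasurableSet {z | d z = 1} := hd (measurableSet_singleton 1)
  have hdstar_set : {z | dstar z = 1} = {z | 0 ≤ h z} := by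
    ext z
    by_cases hz : 0 ≤ h z <;> norm_num [hdstar, hz]
  have hdstar₁ : ∀ z, dstar z = 1 ∨ dstar z = -1 := fun z => by
    by_cases hz : 0 ≤ h z <;> norm_num [hdstar, hz]
  rw [ruleGain_eq_integral_add_setIntegral P hZ hW₁ hW₂ hcond hd_set hd₁,
    ruleGain_eq_integral_add_setIntegral P hZ hW₁ hW₂ hcond
      (hdstar_set ▸ measurableSet_le measurable_const hh) hdstar₁,
    add_le_add_iff_left, show {x | dstar (Z x) = 1} = Z ⁻¹' {z | 0 ≤ h z} from
      congrArg (Z ⁻¹' ·) hdstar_set]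
  have hhZ_int : Integrable (fun ω => h (Z ω)) P := integrable_condExp.congr hcond.symm
  exact setIntegral_le_nonneg (hZ hd_set) (hh.comp hZ).stronglyMeasurable hhZ_int

/-- the rule `d*(z) = sign of E[W₁ - W₂ ∣ Z = z]` maximizes the weighted
benefit `E[1{d(Z) = 1} W₁ + 1{d(Z) = -1} W₂]` over all measurable rules `d : 𝒵 → {1, -1}`. -/
theorem optimal_rule_is_sign_of_conditional_expectation
    {Ω 𝒵 : Type*} [MeasurableSpace Ω] [MeasurableSpace 𝒵]
    (P : Measure Ω) [IsProbabilityMeasure P]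
    (Z : Ω → 𝒵) (hZ : Measurable Z)
    (W₁ W₂ : Ω → ℝ)
    (hW₁ : Integrable W₁ P) (hW₂ : Integrable W₂ P)
    (hW₁0 : ∀ ω, 0 ≤ W₁ ω) (hW₂0 : ∀ ω, 0 ≤ W₂ ω)
    (h : 𝒵 → ℝ) (hh : Measurable h)
    (hcond : (fun ω => h (Z ω))
      =ᵐ[P] P[fun ω => W₁ ω - W₂ ω | MeasurableSpace.comap Z inferInstance])
    (dstar : 𝒵 → ℝ) (hdstar : ∀ z, dstar z = if 0 ≤ h z then 1 else -1) :
    ∀ d : 𝒵 → ℝ, Measurable d → (∀ z, d z = 1 ∨ d z = -1) →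
      ruleGain P W₁ W₂ Z d ≤ ruleGain P W₁ W₂ Z dstar :=
  optimal_rule_is_sign_of_conditional_expectation_general P Z hZ W₁ W₂ hW₁ hW₂ h hh hcond dstar
    hdstar
end
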